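/- Let H > 0, t > 0, 1 ≤ p ≤ 2, and suppose T is a linear operator satisfying ‖Tφ‖_{L^{2k}} ≤ H t^{−(N/4)(1/p − 1/(2k))} ‖φ‖_{L^p} for every integer k ≥ 1. Then for every φ ∈ L^p(R^N), ‖Tφ‖_{exp L^2} ≤ H t^{−N/(4p)} (log(t^{−N/4}+1))^{−1/2} ‖φ‖_{L^p}. -/

import Mathlib

open MeasureTheory ENNReal

/-- Luxembourg norm of exp L² expressed through the series
    Σ_{k≥1} ‖u‖_{L^{2k}}^{2k}/(k! α^{2k}). -/
noncomputable def expL2NormS {N : ℕ} (u : EuclideanSpace ℝ (Fin N) → ℝ) : ℝ :=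
  sInf {α : ℝ | 0 < α ∧
    (∑' k : ℕ, (eLpNorm u ((2 * (k + 1) : ℕ) : ℝ≥0∞) volume).toReal ^ (2 * (k + 1)) /
      ((Nat.factorial (k + 1)) * α ^ (2 * (k + 1)))) ≤ 1}

/- The hypothesis is a moment bound `‖Tφ‖_{2k}^{2k} ≤ s A^{2k}` with `A = H t^{-N/(4p)} ‖φ‖_p`
and `s = t^{N/4}` independent of `k`. For `α ≥ A L^{-1/2}` the `k`-th term of the exp L² series
is then at most `s L^k / k!`, so the series is at most `s (e^L - 1)`, which is `1` exactly when
`L = log (s⁻¹ + 1)`. -/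

theorem hasSum_pow_succ_div_factorial_succ (x : ℝ) :
    HasSum (fun k : ℕ => x ^ (k + 1) / ((k + 1).factorial : ℝ)) (Real.exp x - 1) := by
  have h := (hasSum_nat_add_iff' 1).mpr (NormedSpace.expSeries_div_hasSum_exp (𝔸 := ℝ) x)
  simpa [← Real.exp_eq_exp_ℝ] using h

theorem expL2NormS_le_of_tsum_le {N : ℕ} {u : EuclideanSpace ℝ (Fin N) → ℝ} {α : ℝ}
    (hα : 0 < α)
    (h : ∑' k : ℕ, (eLpNorm u ((2 * (k + 1) : ℕ) : ℝ≥0∞) volume).toReal ^ (2 * (k + 1)) /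
      ((Nat.factorial (k + 1)) * α ^ (2 * (k + 1))) ≤ 1) :
    expL2NormS u ≤ α :=
  csInf_le ⟨0, fun _ hx => hx.1.le⟩ ⟨hα, h⟩

theorem expL2NormS_le_of_moment_le {N : ℕ} {u : EuclideanSpace ℝ (Fin N) → ℝ} {A s : ℝ}
    (hA : 0 ≤ A) (hs : 0 < s)
    (hmom : ∀ k : ℕ, 1 ≤ k →
      (eLpNorm u ((2 * k : ℕ) : ℝ≥0∞) volume).toReal ^ (2 * k) ≤ A ^ (2 * k) * s) :
    expL2NormS u ≤ A * Real.log (s⁻¹ + 1) ^ (-(1 / 2 : ℝ)) := by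
  set L := Real.log (s⁻¹ + 1)
  have hL : 0 < L := Real.log_pos (by linarith [inv_pos.2 hs])
  refine le_of_forall_gt_imp_ge_of_dense fun α hα => ?_
  have hα0 : 0 < α := lt_of_le_of_lt (by positivity) hα
  have hAα : A ^ 2 ≤ α ^ 2 * L := by
    have hsq : (L ^ (-(1 / 2 : ℝ))) ^ 2 = L⁻¹ := by
      rw [← Real.rpow_mul_natCast hL.le, ← Real.rpow_neg_one]
      norm_num
    have := pow_le_pow_left₀ (by positivity) hα.le 2
    rw [mul_pow, hsq, ← div_eq_mul_inv, div_le_iff₀ hL] at this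
    exact this
  have hterm : ∀ k : ℕ,
      (eLpNorm u ((2 * (k + 1) : ℕ) : ℝ≥0∞) volume).toReal ^ (2 * (k + 1)) /
        ((Nat.factorial (k + 1)) * α ^ (2 * (k + 1))) ≤
      s * (L ^ (k + 1) / ((k + 1).factorial : ℝ)) := by
    intro k
    have hpow : A ^ (2 * (k + 1)) ≤ α ^ (2 * (k + 1)) * L ^ (k + 1) := by
      rw [pow_mul, pow_mul, ← mul_pow]
      exact pow_le_pow_left₀ (sq_nonneg A) hAα _
    rw [div_le_iff₀ (by positivity)]
    calc _ ≤ A ^ (2 * (k + 1)) * s := hmom (k + 1) (by omega)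
      _ ≤ α ^ (2 * (k + 1)) * L ^ (k + 1) * s := by gcongr
      _ = _ := by field_simp
  have hsum := (hasSum_pow_succ_div_factorial_succ L).mul_left s
  refine expL2NormS_le_of_tsum_le hα0 ?_
  calc _ ≤ s * (Real.exp L - 1) := by
        rw [← hsum.tsum_eq]
        exact (hsum.summable.of_nonneg_of_le (fun _ => by positivity) hterm).tsum_le_tsum
          hterm hsum.summable
    _ = 1 := by
      rw [Real.exp_log (by positivity), add_sub_cancel_right, mul_inv_cancel₀ hs.ne']

theorem rpow_smoothing_exponent_pow {t : ℝ} (ht : 0 < t) (x p : ℝ) {k : ℕ} (hk : k ≠ 0) :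
    (t ^ (-x / 4 * (1 / p - 1 / (2 * (k : ℝ))))) ^ (2 * k) =
      (t ^ (-x / (4 * p))) ^ (2 * k) * t ^ (x / 4) := by
  rw [← Real.rpow_mul_natCast ht.le, ← Real.rpow_mul_natCast ht.le, ← Real.rpow_add ht]
  congr 1
  push_cast
  field_simp
  ring

theorem smoothing_expL2_bound_general {N : ℕ}
    (T : (EuclideanSpace ℝ (Fin N) → ℝ) → (EuclideanSpace ℝ (Fin N) → ℝ))
    (H t p : ℝ) (hH : 0 < H) (ht : 0 < t)
    (hbound : ∀ k : ℕ, 1 ≤ k → ∀ φ : EuclideanSpace ℝ (Fin N) → ℝ,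
      MemLp φ (ENNReal.ofReal p) volume →
      eLpNorm (T φ) ((2 * k : ℕ) : ℝ≥0∞) volume ≤
        ENNReal.ofReal (H * t ^ (-(N : ℝ) / 4 * (1 / p - 1 / (2 * (k : ℝ))))) *
          eLpNorm φ (ENNReal.ofReal p) volume)
    (φ : EuclideanSpace ℝ (Fin N) → ℝ) (hφ : MemLp φ (ENNReal.ofReal p) volume) :
    expL2NormS (T φ) ≤
      H * t ^ (-(N : ℝ) / (4 * p)) * (Real.log (t ^ (-(N : ℝ) / 4) + 1)) ^ (-(1 / 2 : ℝ)) *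
        (eLpNorm φ (ENNReal.ofReal p) volume).toReal := by
  set c := (eLpNorm φ (ENNReal.ofReal p) volume).toReal
  have hmom : ∀ k : ℕ, 1 ≤ k → (eLpNorm (T φ) ((2 * k : ℕ) : ℝ≥0∞) volume).toReal ^ (2 * k) ≤
      (H * t ^ (-(N : ℝ) / (4 * p)) * c) ^ (2 * k) * t ^ ((N : ℝ) / 4) := by
    intro k hk
    have hnorm : (eLpNorm (T φ) ((2 * k : ℕ) : ℝ≥0∞) volume).toReal ≤
        H * t ^ (-(N : ℝ) / 4 * (1 / p - 1 / (2 * (k : ℝ)))) * c := by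
      have := ENNReal.toReal_mono (mul_ne_top ofReal_ne_top hφ.eLpNorm_ne_top)
        (hbound k hk φ hφ)
      rwa [toReal_mul, toReal_ofReal (by positivity)] at this
    calc _ ≤ (H * t ^ (-(N : ℝ) / 4 * (1 / p - 1 / (2 * (k : ℝ)))) * c) ^ (2 * k) := by gcongr
      _ = _ := by
        rw [mul_pow, mul_pow, rpow_smoothing_exponent_pow ht _ _ (by omega)]
        ring
  have := expL2NormS_le_of_moment_le (by positivity) (by positivity) hmom
  rwa [← Real.rpow_neg ht.le, ← neg_div, mul_right_comm] at this

/-- Smoothing L^p → exp L² estimate: if ‖Tφ‖_{L^{2k}} ≤ H t^{−(N/4)(1/p−1/(2k))}‖φ‖_{L^p}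
    for all k ≥ 1, then ‖Tφ‖_{exp L²} ≤ H t^{−N/(4p)} (log(t^{−N/4}+1))^{−1/2} ‖φ‖_{L^p}. -/
theorem smoothing_expL2_bound {N : ℕ}
    (T : (EuclideanSpace ℝ (Fin N) → ℝ) → (EuclideanSpace ℝ (Fin N) → ℝ))
    (hT : IsLinearMap ℝ T) (H t p : ℝ) (hH : 0 < H) (ht : 0 < t)
    (hp1 : 1 ≤ p) (hp2 : p ≤ 2)
    (hbound : ∀ k : ℕ, 1 ≤ k → ∀ φ : EuclideanSpace ℝ (Fin N) → ℝ,
      MemLp φ (ENNReal.ofReal p) volume →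
      eLpNorm (T φ) ((2 * k : ℕ) : ℝ≥0∞) volume ≤
        ENNReal.ofReal (H * t ^ (-(N : ℝ) / 4 * (1 / p - 1 / (2 * (k : ℝ))))) *
          eLpNorm φ (ENNReal.ofReal p) volume)
    (φ : EuclideanSpace ℝ (Fin N) → ℝ) (hφ : MemLp φ (ENNReal.ofReal p) volume) :
    expL2NormS (T φ) ≤
      H * t ^ (-(N : ℝ) / (4 * p)) * (Real.log (t ^ (-(N : ℝ) / 4) + 1)) ^ (-(1 / 2 : ℝ)) *
        (eLpNorm φ (ENNReal.ofReal p) volume).toReal :=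
  smoothing_expL2_bound_general T H t p hH ht hbound φ hφ
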